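/- Let γ be a smooth regular evolution of space curves with ‖∂sγ‖ = 1 everywhere which satisfies the Lund-Regge evolution equation ∂s∂tγ = ∂sγ × ∂tγ. Then the curvature and torsion satisfy ∂tκ = −b and ∂tτ = −∂s(c/κ) everywhere, where b = ⟨∂tγ, N⟩ and c = ⟨∂tγ, B⟩. -/

import Mathlib

noncomputable section
open RealInnerProductSpace

/-- Euclidean three-space. -/
abbrev E3 := EuclideanSpace ℝ (Fin 3)

/-- The cross product on `ℝ³`. -/
def cross3 (x y : E3) : E3 :=
  (WithLp.equiv 2 (Fin 3 → ℝ)).symm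
    ![x 1 * y 2 - x 2 * y 1, x 2 * y 0 - x 0 * y 2, x 0 * y 1 - x 1 * y 0]

/-- Partial derivative with respect to the first variable `s`. -/
def pdS {E : Type*} [NormedAddCommGroup E] [NormedSpace ℝ E] (f : ℝ × ℝ → E) (p : ℝ × ℝ) : E :=
  fderiv ℝ f p (1, 0)

/-- Partial derivative with respect to the second variable `t`. -/
def pdT {E : Type*} [NormedAddCommGroup E] [NormedSpace ℝ E] (f : ℝ × ℝ → E) (p : ℝ × ℝ) : E :=
  fderiv ℝ f p (0, 1)

/-- The unit tangent vector `T = ∂sγ/‖∂sγ‖`. -/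
def Tv (γ : ℝ × ℝ → E3) (p : ℝ × ℝ) : E3 := ‖pdS γ p‖⁻¹ • pdS γ p

/-- The binormal vector `B = (∂sγ × ∂s∂sγ)/‖∂sγ × ∂s∂sγ‖`. -/
def Bv (γ : ℝ × ℝ → E3) (p : ℝ × ℝ) : E3 :=
  ‖cross3 (pdS γ p) (pdS (pdS γ) p)‖⁻¹ • cross3 (pdS γ p) (pdS (pdS γ) p)

/-- The principal normal vector `N = B × T`. -/
def Nv (γ : ℝ × ℝ → E3) (p : ℝ × ℝ) : E3 := cross3 (Bv γ p) (Tv γ p)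

/-- The curvature `κ = ‖∂sγ × ∂s∂sγ‖/‖∂sγ‖³`. -/
def curv (γ : ℝ × ℝ → E3) (p : ℝ × ℝ) : ℝ :=
  ‖cross3 (pdS γ p) (pdS (pdS γ) p)‖ / ‖pdS γ p‖ ^ 3

/-- The torsion `τ = ⟨∂sγ × ∂s∂sγ, ∂s∂s∂sγ⟩/‖∂sγ × ∂s∂sγ‖²`. -/
def tors (γ : ℝ × ℝ → E3) (p : ℝ × ℝ) : ℝ :=
  ⟪cross3 (pdS γ p) (pdS (pdS γ) p), pdS (pdS (pdS γ)) p⟫ /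
    ‖cross3 (pdS γ p) (pdS (pdS γ) p)‖ ^ 2

/-- The length element `ℓ = ‖∂sγ‖`. -/
def lenE (γ : ℝ × ℝ → E3) (p : ℝ × ℝ) : ℝ := ‖pdS γ p‖

/-- The coefficient `a = ⟨∂tγ, T⟩`. -/
def ca (γ : ℝ × ℝ → E3) (p : ℝ × ℝ) : ℝ := ⟪pdT γ p, Tv γ p⟫

/-- The coefficient `b = ⟨∂tγ, N⟩`. -/
def cb (γ : ℝ × ℝ → E3) (p : ℝ × ℝ) : ℝ := ⟪pdT γ p, Nv γ p⟫

/-- The coefficient `c = ⟨∂tγ, B⟩`. -/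
def cc (γ : ℝ × ℝ → E3) (p : ℝ × ℝ) : ℝ := ⟪pdT γ p, Bv γ p⟫

/-- Regularity of the evolution: `∂sγ ≠ 0` and `∂sγ × ∂s∂sγ ≠ 0` everywhere. -/
def RegularEvolution (γ : ℝ × ℝ → E3) : Prop :=
  ∀ p : ℝ × ℝ, pdS γ p ≠ 0 ∧ cross3 (pdS γ p) (pdS (pdS γ) p) ≠ 0

lemma cross3_c0 (x y : E3) : cross3 x y 0 = x 1 * y 2 - x 2 * y 1 := by simp [cross3]
lemma cross3_c1 (x y : E3) : cross3 x y 1 = x 2 * y 0 - x 0 * y 2 := by simp [cross3]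
lemma cross3_c2 (x y : E3) : cross3 x y 2 = x 0 * y 1 - x 1 * y 0 := by simp [cross3]

lemma inner3 (x y : E3) : ⟪x,y⟫ = x 0 * y 0 + x 1 * y 1 + x 2 * y 2 := by
  simp [PiLp.inner_apply, RCLike.inner_apply, Fin.sum_univ_three]
  ring

lemma E3ext {x y : E3} (h0 : x 0 = y 0) (h1 : x 1 = y 1) (h2 : x 2 = y 2) : x = y := by
  ext i; fin_cases i <;> assumption

lemma cross3_add_left (x y z : E3) : cross3 (x + y) z = cross3 x z + cross3 y z := by
  apply E3ext <;>
    simp [cross3_c0, cross3_c1, cross3_c2, PiLp.add_apply] <;> ring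

lemma cross3_add_right (x y z : E3) : cross3 x (y + z) = cross3 x y + cross3 x z := by
  apply E3ext <;>
    simp [cross3_c0, cross3_c1, cross3_c2, PiLp.add_apply] <;> ring

lemma cross3_smul_left (c : ℝ) (x y : E3) : cross3 (c • x) y = c • cross3 x y := by
  apply E3ext <;>
    simp [cross3_c0, cross3_c1, cross3_c2, PiLp.smul_apply, smul_eq_mul, Fin.sum_univ_three] <;> ring

lemma cross3_smul_right (c : ℝ) (x y : E3) : cross3 x (c • y) = c • cross3 x y := by
  apply E3ext <;>
    simp [cross3_c0, cross3_c1, cross3_c2, PiLp.smul_apply, smul_eq_mul, Fin.sum_univ_three] <;> ring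

/-- cross3 as a continuous bilinear map -/
def crossL : E3 →L[ℝ] E3 →L[ℝ] E3 :=
  LinearMap.toContinuousLinearMap <|
  { toFun := fun x => LinearMap.toContinuousLinearMap
      { toFun := fun y => cross3 x y
        map_add' := fun y z => cross3_add_right x y z
        map_smul' := fun c y => cross3_smul_right c x y }
    map_add' := by
      intro x y; apply ContinuousLinearMap.ext; intro z
      exact cross3_add_left x y z
    map_smul' := by
      intro c x; apply ContinuousLinearMap.ext; intro z
      exact cross3_smul_left c x z }

@[simp] lemma crossL_apply (x y : E3) : crossL x y = cross3 x y := rfl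

section CalcPlumbing

variable {F : Type*} [NormedAddCommGroup F] [NormedSpace ℝ F]

lemma contDiff_pdS {f : ℝ × ℝ → F} (hf : ContDiff ℝ (⊤ : ℕ∞) f) : ContDiff ℝ (⊤ : ℕ∞) (pdS f) :=
  (hf.fderiv_right (by simp)).clm_apply contDiff_const

lemma contDiff_pdT {f : ℝ × ℝ → F} (hf : ContDiff ℝ (⊤ : ℕ∞) f) : ContDiff ℝ (⊤ : ℕ∞) (pdT f) :=
  (hf.fderiv_right (by simp)).clm_apply contDiff_const

lemma fderiv_fderiv_apply {f : ℝ × ℝ → F} (hf : ContDiff ℝ (⊤ : ℕ∞) f) (p v w : ℝ × ℝ) :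
    fderiv ℝ (fun q => fderiv ℝ f q w) p v = fderiv ℝ (fderiv ℝ f) p v w := by
  have hdf : DifferentiableAt ℝ (fderiv ℝ f) p :=
    ((hf.fderiv_right (m := (⊤ : ℕ∞)) (by simp)).differentiable (by simp)) p
  rw [show (fun q => fderiv ℝ f q w) = (fun q => (fderiv ℝ f q) w) from rfl,
    fderiv_clm_apply hdf (differentiableAt_const w)]
  simp

lemma pd_comm {f : ℝ × ℝ → F} (hf : ContDiff ℝ (⊤ : ℕ∞) f) (p : ℝ × ℝ) :
    pdT (pdS f) p = pdS (pdT f) p := by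
  unfold pdS pdT
  rw [fderiv_fderiv_apply hf, fderiv_fderiv_apply hf]
  exact (hf.contDiffAt.isSymmSndFDerivAt (by rw [minSmoothness_of_isRCLikeNormedField]; show ((2:ℕ∞) : WithTop ℕ∞) ≤ ((⊤:ℕ∞) : WithTop ℕ∞); exact WithTop.coe_le_coe.mpr le_top) (0,1) (1,0)).symm ▸ rfl

end CalcPlumbing
section Rules

variable {p : ℝ × ℝ}

lemma fderiv_cross_apply {f g : ℝ × ℝ → E3} (hf : DifferentiableAt ℝ f p)
    (hg : DifferentiableAt ℝ g p) (v : ℝ × ℝ) :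
    fderiv ℝ (fun q => cross3 (f q) (g q)) p v =
      cross3 (f p) (fderiv ℝ g p v) + cross3 (fderiv ℝ f p v) (g p) := by
  have hc : DifferentiableAt ℝ (fun q => crossL (f q)) p :=
    (crossL.differentiable.differentiableAt).comp p hf
  have h2 : fderiv ℝ (fun q => crossL (f q)) p = crossL.comp (fderiv ℝ f p) := by
    rw [show (fun q => crossL (f q)) = crossL ∘ f from rfl,
      fderiv_comp p crossL.differentiable.differentiableAt hf, crossL.fderiv]
  have h3 : fderiv ℝ (fun q => crossL (f q) (g q)) p v =
      crossL (f p) (fderiv ℝ g p v) + crossL (fderiv ℝ f p v) (g p) := by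
    rw [fderiv_clm_apply hc hg]
    simp [h2]
  simpa using h3

lemma fderiv_div_apply {u v : ℝ × ℝ → ℝ} (hu : DifferentiableAt ℝ u p)
    (hv : DifferentiableAt ℝ v p) (hne : v p ≠ 0) (w : ℝ × ℝ) :
    fderiv ℝ (fun q => u q / v q) p w =
      (fderiv ℝ u p w * v p - u p * fderiv ℝ v p w) / (v p) ^ 2 := by
  have hinv : HasFDerivAt (fun q => (v q)⁻¹) ((-((v p) ^ 2)⁻¹) • fderiv ℝ v p) p :=
    (hasDerivAt_inv hne).comp_hasFDerivAt p hv.hasFDerivAt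
  have hmul := hu.hasFDerivAt.mul hinv
  have heq : (fun q => u q / v q) = fun q => u q * (v q)⁻¹ := by
    funext q; rw [div_eq_mul_inv]
  rw [heq, show (fun q => u q * (v q)⁻¹) = (u * fun q => (v q)⁻¹) from rfl, hmul.fderiv]
  simp only [ContinuousLinearMap.add_apply, ContinuousLinearMap.smul_apply, smul_eq_mul]
  field_simp
  ring

lemma fderiv_sqrt_apply {u : ℝ × ℝ → ℝ} (hu : DifferentiableAt ℝ u p) (hne : u p ≠ 0)
    (w : ℝ × ℝ) :
    fderiv ℝ (fun q => Real.sqrt (u q)) p w = fderiv ℝ u p w / (2 * Real.sqrt (u p)) := by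
  have h := (Real.hasDerivAt_sqrt hne).comp_hasFDerivAt p hu.hasFDerivAt
  rw [show (fun q => Real.sqrt (u q)) = Real.sqrt ∘ u from rfl, h.fderiv]
  simp only [ContinuousLinearMap.smul_apply, smul_eq_mul]
  ring

end Rules
section MoreAlg

lemma lagrange_self (x y : E3) :
    ⟪cross3 x y, cross3 x y⟫ = ⟪x,x⟫ * ⟪y,y⟫ - ⟪x,y⟫ * ⟪x,y⟫ := by
  simp only [inner3, cross3_c0, cross3_c1, cross3_c2]; ring

lemma triple_left (x y z : E3) : cross3 (cross3 x y) z = ⟪z,x⟫ • y - ⟪z,y⟫ • x := by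
  apply E3ext <;>
    simp [cross3_c0, cross3_c1, cross3_c2, inner3, PiLp.sub_apply, PiLp.smul_apply,
      smul_eq_mul, Fin.sum_univ_three] <;> ring

end MoreAlg

section Wrappers

variable {p : ℝ × ℝ} {f g : ℝ × ℝ → E3} {u v : ℝ × ℝ → ℝ}

lemma diff_cross (hf : Differentiable ℝ f) (hg : Differentiable ℝ g) :
    Differentiable ℝ (fun q => cross3 (f q) (g q)) := fun q =>
  ((crossL.differentiable.differentiableAt).comp q (hf q)).clm_apply (hg q)

lemma pdS_inner (hf : DifferentiableAt ℝ f p) (hg : DifferentiableAt ℝ g p) :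
    pdS (fun q => ⟪f q, g q⟫) p = ⟪f p, pdS g p⟫ + ⟪pdS f p, g p⟫ :=
  fderiv_inner_apply ℝ hf hg _

lemma pdT_inner (hf : DifferentiableAt ℝ f p) (hg : DifferentiableAt ℝ g p) :
    pdT (fun q => ⟪f q, g q⟫) p = ⟪f p, pdT g p⟫ + ⟪pdT f p, g p⟫ :=
  fderiv_inner_apply ℝ hf hg _

lemma pdS_cross (hf : DifferentiableAt ℝ f p) (hg : DifferentiableAt ℝ g p) :
    pdS (fun q => cross3 (f q) (g q)) p = cross3 (f p) (pdS g p) + cross3 (pdS f p) (g p) :=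
  fderiv_cross_apply hf hg _

lemma pdT_cross (hf : DifferentiableAt ℝ f p) (hg : DifferentiableAt ℝ g p) :
    pdT (fun q => cross3 (f q) (g q)) p = cross3 (f p) (pdT g p) + cross3 (pdT f p) (g p) :=
  fderiv_cross_apply hf hg _

lemma pdS_addE (hf : DifferentiableAt ℝ f p) (hg : DifferentiableAt ℝ g p) :
    pdS (fun q => f q + g q) p = pdS f p + pdS g p := by
  unfold pdS; rw [fderiv_fun_add hf hg]; rfl

lemma pdT_div (hu : DifferentiableAt ℝ u p) (hv : DifferentiableAt ℝ v p) (hne : v p ≠ 0) :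
    pdT (fun q => u q / v q) p = (pdT u p * v p - u p * pdT v p) / (v p) ^ 2 :=
  fderiv_div_apply hu hv hne _

lemma pdS_div (hu : DifferentiableAt ℝ u p) (hv : DifferentiableAt ℝ v p) (hne : v p ≠ 0) :
    pdS (fun q => u q / v q) p = (pdS u p * v p - u p * pdS v p) / (v p) ^ 2 :=
  fderiv_div_apply hu hv hne _

lemma pdT_sqrt (hu : DifferentiableAt ℝ u p) (hne : u p ≠ 0) :
    pdT (fun q => Real.sqrt (u q)) p = pdT u p / (2 * Real.sqrt (u p)) :=
  fderiv_sqrt_apply hu hne _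

lemma pd_const (p : ℝ × ℝ) (c : ℝ) : pdS (fun _ => c) p = 0 := by
  unfold pdS; rw [fderiv_fun_const]; rfl

end Wrappers

lemma keyN (A B W : E3) (h1 : ⟪A,A⟫ = (1:ℝ)) (h2 : ⟪A,B⟫ = (0:ℝ)) :
    ⟪cross3 A (cross3 A W) + cross3 B W, B⟫ = -⟪W,B⟫ := by
  have e1 := h1; have e2 := h2
  rw [inner3] at e1 e2
  simp only [inner3, cross3_c0, cross3_c1, cross3_c2, PiLp.add_apply]
  linear_combination ((-1:ℝ)*(B 0)*(W 0) + (-1:ℝ)*(B 1)*(W 1) + (-1:ℝ)*(B 2)*(W 2)) * e1 + ((A 0)*(W 0) + (A 1)*(W 1) + (A 2)*(W 2)) * e2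

/-- For a smooth regular Lund-Regge evolution `γ` with `‖∂sγ‖ = 1` everywhere, the curvature
and torsion satisfy `∂tκ = −b` and `∂tτ = −∂s(c/κ)` everywhere. -/
theorem lund_regge_curvature_torsion (γ : ℝ × ℝ → E3)
    (hγ : ContDiff ℝ (⊤ : ℕ∞) γ) (hreg : RegularEvolution γ)
    (hunit : ∀ p : ℝ × ℝ, ‖pdS γ p‖ = 1)
    (hLR : ∀ p : ℝ × ℝ, pdS (pdT γ) p = cross3 (pdS γ p) (pdT γ p)) :
    ∀ p : ℝ × ℝ,
      pdT (curv γ) p = -cb γ p ∧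
      pdT (tors γ) p = -pdS (fun q => cc γ q / curv γ q) p := by
  -- smoothness
  have hs1 : ContDiff ℝ (⊤ : ℕ∞) (pdS γ) := contDiff_pdS hγ
  have hs2 : ContDiff ℝ (⊤ : ℕ∞) (pdS (pdS γ)) := contDiff_pdS hs1
  have hs3 : ContDiff ℝ (⊤ : ℕ∞) (pdS (pdS (pdS γ))) := contDiff_pdS hs2
  have hst : ContDiff ℝ (⊤ : ℕ∞) (pdT γ) := contDiff_pdT hγ
  have hd1 : Differentiable ℝ (pdS γ) := hs1.differentiable (by simp)
  have hd2 : Differentiable ℝ (pdS (pdS γ)) := hs2.differentiable (by simp)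
  have hd3 : Differentiable ℝ (pdS (pdS (pdS γ))) := hs3.differentiable (by simp)
  have hdt : Differentiable ℝ (pdT γ) := hst.differentiable (by simp)
  have hdc : Differentiable ℝ (fun q => cross3 (pdS γ q) (pdS (pdS γ) q)) :=
    diff_cross hd1 hd2
  have hdK2 : Differentiable ℝ (fun q => ⟪pdS (pdS γ) q, pdS (pdS γ) q⟫) :=
    hd2.inner ℝ hd2
  -- frame constraints
  have F0 : ∀ q, ⟪pdS γ q, pdS γ q⟫ = (1:ℝ) := by
    intro q; rw [real_inner_self_eq_norm_sq, hunit q, one_pow]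
  have F1 : ∀ q, ⟪pdS γ q, pdS (pdS γ) q⟫ = (0:ℝ) := by
    intro q
    have h0 : pdS (fun r => ⟪pdS γ r, pdS γ r⟫) q = 0 := by
      rw [show (fun r => ⟪pdS γ r, pdS γ r⟫) = fun _ => (1:ℝ) from funext F0]
      exact pd_const q 1
    have h1 := pdS_inner (hd1 q) (hd1 q)
    rw [h0] at h1
    have h2 := real_inner_comm (pdS γ q) (pdS (pdS γ) q)
    linarith [h1.symm]
  have F2 : ∀ q, ⟪pdS γ q, pdS (pdS (pdS γ)) q⟫ = -⟪pdS (pdS γ) q, pdS (pdS γ) q⟫ := by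
    intro q
    have h0 : pdS (fun r => ⟪pdS γ r, pdS (pdS γ) r⟫) q = 0 := by
      rw [show (fun r => ⟪pdS γ r, pdS (pdS γ) r⟫) = fun _ => (0:ℝ) from funext F1]
      exact pd_const q 0
    have h1 := pdS_inner (hd1 q) (hd2 q)
    rw [h0] at h1
    have h2 := real_inner_comm (pdS (pdS γ) q) (pdS γ q)
    linarith [h1.symm]
  have F3 : ∀ q, pdT (pdS γ) q = cross3 (pdS γ q) (pdT γ q) :=
    fun q => (pd_comm hγ q).trans (hLR q)
  have F4 : ∀ q, pdT (pdS (pdS γ)) q =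
      cross3 (pdS γ q) (cross3 (pdS γ q) (pdT γ q)) + cross3 (pdS (pdS γ) q) (pdT γ q) := by
    intro q
    rw [pd_comm hs1 q,
      show pdT (pdS γ) = (fun r => cross3 (pdS γ r) (pdT γ r)) from funext F3,
      pdS_cross (hd1 q) (hdt q), hLR q]
  intro p
  -- positivity and norm facts
  have hK2pos : ∀ q, (0:ℝ) < ⟪pdS (pdS γ) q, pdS (pdS γ) q⟫ := by
    intro q
    have h := pow_pos (norm_pos_iff.mpr (hreg q).2) 2
    rw [← real_inner_self_eq_norm_sq, lagrange_self, F0 q, F1 q] at h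
    nlinarith [h]
  have hnormu : ∀ q, ‖cross3 (pdS γ q) (pdS (pdS γ) q)‖ =
      Real.sqrt ⟪pdS (pdS γ) q, pdS (pdS γ) q⟫ := by
    intro q
    rw [show ‖cross3 (pdS γ q) (pdS (pdS γ) q)‖
        = Real.sqrt (‖cross3 (pdS γ q) (pdS (pdS γ) q)‖ ^ 2)
      from (Real.sqrt_sq (norm_nonneg _)).symm]
    rw [← real_inner_self_eq_norm_sq, lagrange_self, F0 q, F1 q]
    norm_num
  have hne : ⟪pdS (pdS γ) p, pdS (pdS γ) p⟫ ≠ 0 := ne_of_gt (hK2pos p)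
  -- functional forms
  have hcurvfun : curv γ = fun q => Real.sqrt ⟪pdS (pdS γ) q, pdS (pdS γ) q⟫ := by
    funext q; unfold curv; rw [hunit q, hnormu q]; norm_num
  have htorsfun : tors γ = fun q =>
      ⟪cross3 (pdS γ q) (pdS (pdS γ) q), pdS (pdS (pdS γ)) q⟫ /
        ⟪pdS (pdS γ) q, pdS (pdS γ) q⟫ := by
    funext q; unfold tors
    rw [hnormu q, Real.sq_sqrt (le_of_lt (hK2pos q))]
  have hccfun : (fun q => cc γ q / curv γ q) = fun q =>
      ⟪pdT γ q, cross3 (pdS γ q) (pdS (pdS γ) q)⟫ / ⟪pdS (pdS γ) q, pdS (pdS γ) q⟫ := by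
    funext q
    unfold cc Bv
    rw [hcurvfun]
    beta_reduce
    rw [real_inner_smul_right, hnormu q, inv_mul_eq_div, div_div,
      Real.mul_self_sqrt (le_of_lt (hK2pos q))]
  have hcb : cb γ p = ⟪pdT γ p, pdS (pdS γ) p⟫ /
      Real.sqrt ⟪pdS (pdS γ) p, pdS (pdS γ) p⟫ := by
    unfold cb Nv Tv Bv
    rw [hunit p, inv_one, one_smul, cross3_smul_left, triple_left, F0 p, F1 p, hnormu p]
    rw [real_inner_smul_right]
    rw [show (1:ℝ) • pdS (pdS γ) p - (0:ℝ) • pdS γ p = pdS (pdS γ) p by simp]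
    exact inv_mul_eq_div _ _
  -- derivatives of the scalar quantities
  have dK2T : pdT (fun q => ⟪pdS (pdS γ) q, pdS (pdS γ) q⟫) p
      = -(2 * ⟪pdT γ p, pdS (pdS γ) p⟫) := by
    rw [pdT_inner (hd2 p) (hd2 p), F4 p]
    have hk := keyN (pdS γ p) (pdS (pdS γ) p) (pdT γ p) (F0 p) (F1 p)
    have hcm := real_inner_comm
      (cross3 (pdS γ p) (cross3 (pdS γ p) (pdT γ p)) + cross3 (pdS (pdS γ) p) (pdT γ p))
      (pdS (pdS γ) p)
    linarith [hk, hcm]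
  have dK2S : pdS (fun q => ⟪pdS (pdS γ) q, pdS (pdS γ) q⟫) p
      = 2 * ⟪pdS (pdS (pdS γ)) p, pdS (pdS γ) p⟫ := by
    rw [pdS_inner (hd2 p) (hd2 p),
      real_inner_comm (pdS (pdS γ) p) (pdS (pdS (pdS γ)) p)]
    ring
  constructor
  · -- curvature evolution
    rw [hcurvfun, pdT_sqrt (hdK2 p) hne, dK2T, hcb]
    have hs0 : Real.sqrt ⟪pdS (pdS γ) p, pdS (pdS γ) p⟫ ≠ 0 :=
      ne_of_gt (Real.sqrt_pos.mpr (hK2pos p))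
    rw [neg_div, mul_div_mul_left _ _ (two_ne_zero (α := ℝ))]
  · -- torsion evolution
    have hdin : Differentiable ℝ (fun r => cross3 (pdS γ r) (pdT γ r)) := diff_cross hd1 hdt
    have hdin2 : Differentiable ℝ
        (fun r => cross3 (pdS γ r) (cross3 (pdS γ r) (pdT γ r)) + cross3 (pdS (pdS γ) r) (pdT γ r)) :=
      (diff_cross hd1 hdin).add (diff_cross hd2 hdt)
    have hpdSin : pdS (fun r => cross3 (pdS γ r) (pdT γ r)) p
        = cross3 (pdS γ p) (cross3 (pdS γ p) (pdT γ p)) + cross3 (pdS (pdS γ) p) (pdT γ p) := by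
      rw [pdS_cross (hd1 p) (hdt p), hLR p]
    have F5 : pdT (pdS (pdS (pdS γ))) p =
        (cross3 (pdS γ p) (cross3 (pdS γ p) (cross3 (pdS γ p) (pdT γ p))
            + cross3 (pdS (pdS γ) p) (pdT γ p))
          + cross3 (pdS (pdS γ) p) (cross3 (pdS γ p) (pdT γ p)))
        + (cross3 (pdS (pdS γ) p) (cross3 (pdS γ p) (pdT γ p))
          + cross3 (pdS (pdS (pdS γ)) p) (pdT γ p)) := by
      rw [pd_comm hs2 p,
        show pdT (pdS (pdS γ)) = (fun r =>
          cross3 (pdS γ r) (cross3 (pdS γ r) (pdT γ r)) + cross3 (pdS (pdS γ) r) (pdT γ r))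
          from funext F4,
        pdS_addE ((diff_cross hd1 hdin) p) ((diff_cross hd2 hdt) p),
        pdS_cross (hd1 p) (hdin p), hpdSin, pdS_cross (hd2 p) (hdt p), hLR p]
    have dWT : pdT (fun q => ⟪cross3 (pdS γ q) (pdS (pdS γ) q), pdS (pdS (pdS γ)) q⟫) p
        = ⟪cross3 (pdS γ p) (pdS (pdS γ) p),
            (cross3 (pdS γ p) (cross3 (pdS γ p) (cross3 (pdS γ p) (pdT γ p))
                + cross3 (pdS (pdS γ) p) (pdT γ p))
              + cross3 (pdS (pdS γ) p) (cross3 (pdS γ p) (pdT γ p)))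
            + (cross3 (pdS (pdS γ) p) (cross3 (pdS γ p) (pdT γ p))
              + cross3 (pdS (pdS (pdS γ)) p) (pdT γ p))⟫
          + ⟪cross3 (pdS γ p) (cross3 (pdS γ p) (cross3 (pdS γ p) (pdT γ p))
                + cross3 (pdS (pdS γ) p) (pdT γ p))
              + cross3 (cross3 (pdS γ p) (pdT γ p)) (pdS (pdS γ) p), pdS (pdS (pdS γ)) p⟫ := by
      rw [pdT_inner (hdc p) (hd3 p), pdT_cross (hd1 p) (hd2 p), F3 p, F4 p, F5]
    have dVS : pdS (fun q => ⟪pdT γ q, cross3 (pdS γ q) (pdS (pdS γ) q)⟫) p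
        = ⟪pdT γ p, cross3 (pdS γ p) (pdS (pdS (pdS γ)) p)
              + cross3 (pdS (pdS γ) p) (pdS (pdS γ) p)⟫
          + ⟪cross3 (pdS γ p) (pdT γ p), cross3 (pdS γ p) (pdS (pdS γ) p)⟫ := by
      rw [pdS_inner (hdt p) (hdc p), pdS_cross (hd1 p) (hd2 p), hLR p]
    rw [htorsfun, hccfun,
      pdT_div ((hdc.inner ℝ hd3) p) (hdK2 p) hne,
      pdS_div ((hdt.inner ℝ hdc) p) (hdK2 p) hne,
      dWT, dK2T, dK2S, dVS]
    have e1 := F0 p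
    have e2 := F1 p
    rw [inner3] at e1 e2
    simp only [inner3, cross3_c0, cross3_c1, cross3_c2, PiLp.add_apply]
    linear_combination (((-1:ℝ)*(pdS γ p 0)^2*(pdS (pdS γ) p 0)^2*(pdS (pdS γ) p 1)*(pdT γ p 1) + (-1:ℝ)*(pdS γ p 0)^2*(pdS (pdS γ) p 0)^2*(pdS (pdS γ) p 2)*(pdT γ p 2) + (-1:ℝ)*(pdS γ p 0)^2*(pdS (pdS γ) p 1)^3*(pdT γ p 1) + (-1:ℝ)*(pdS γ p 0)^2*(pdS (pdS γ) p 1)^2*(pdS (pdS γ) p 2)*(pdT γ p 2) + (-1:ℝ)*(pdS γ p 0)^2*(pdS (pdS γ) p 1)*(pdS (pdS γ) p 2)^2*(pdT γ p 1) + (-1:ℝ)*(pdS γ p 0)^2*(pdS (pdS γ) p 2)^3*(pdT γ p 2) + (pdS γ p 0)*(pdS γ p 1)*(pdS (pdS γ) p 0)^3*(pdT γ p 1) + (pdS γ p 0)*(pdS γ p 1)*(pdS (pdS γ) p 0)^2*(pdS (pdS γ) p 1)*(pdT γ p 0) + (pdS γ p 0)*(pdS γ p 1)*(pdS (pdS γ)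 p 0)*(pdS (pdS γ) p 1)^2*(pdT γ p 1) + (pdS γ p 0)*(pdS γ p 1)*(pdS (pdS γ) p 0)*(pdS (pdS γ) p 2)^2*(pdT γ p 1) + (pdS γ p 0)*(pdS γ p 1)*(pdS (pdS γ) p 1)^3*(pdT γ p 0) + (pdS γ p 0)*(pdS γ p 1)*(pdS (pdS γ) p 1)*(pdS (pdS γ) p 2)^2*(pdT γ p 0) + (pdS γ p 0)*(pdS γ p 2)*(pdS (pdS γ) p 0)^3*(pdT γ p 2) + (pdS γ p 0)*(pdS γ p 2)*(pdS (pdS γ) p 0)^2*(pdS (pdS γ) p 2)*(pdT γ p 0) + (pdS γ p 0)*(pdS γ p 2)*(pdS (pdS γ) p 0)*(pdS (pdS γ) p 1)^2*(pdT γ p 2) + (pdS γ p 0)*(pdS γ p 2)*(pdS (pdS γ) p 0)*(pdS (pdS γ) p 2)^2*(pdT γ p 2) + (pdS γ p 0)*(pdS γ p 2)*(pdS (pdS γ) p 1)^2*(pdS (pdS γ) p 2)*(pdT γ p 0) + (pdS γ p 0)*(pdS γ p 2)*(pdS (pdS γ) p 2)^3*(pdT γ p 0) + (pdS γ p 0)*(pdS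 (pdS γ) p 0)^2*(pdS (pdS (pdS γ)) p 1)*(pdT γ p 2) + (-1:ℝ)*(pdS γ p 0)*(pdS (pdS γ) p 0)^2*(pdS (pdS (pdS γ)) p 2)*(pdT γ p 1) + (pdS γ p 0)*(pdS (pdS γ) p 1)^2*(pdS (pdS (pdS γ)) p 1)*(pdT γ p 2) + (-1:ℝ)*(pdS γ p 0)*(pdS (pdS γ) p 1)^2*(pdS (pdS (pdS γ)) p 2)*(pdT γ p 1) + (pdS γ p 0)*(pdS (pdS γ) p 2)^2*(pdS (pdS (pdS γ)) p 1)*(pdT γ p 2) + (-1:ℝ)*(pdS γ p 0)*(pdS (pdS γ) p 2)^2*(pdS (pdS (pdS γ)) p 2)*(pdT γ p 1) + (-1:ℝ)*(pdS γ p 1)^2*(pdS (pdS γ) p 0)^3*(pdT γ p 0) + (-1:ℝ)*(pdS γ p 1)^2*(pdS (pdS γ) p 0)^2*(pdS (pdS γ) p 2)*(pdT γ p 2) + (-1:ℝ)*(pdS γ p 1)^2*(pdS (pdS γ) p 0)*(pdS (pdS γ) p 1)^2*(pdT γ p 0) + (-1:ℝ)*(pdS γ p 1)^2*(pdS (pdS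 γ) p 0)*(pdS (pdS γ) p 2)^2*(pdT γ p 0) + (-1:ℝ)*(pdS γ p 1)^2*(pdS (pdS γ) p 1)^2*(pdS (pdS γ) p 2)*(pdT γ p 2) + (-1:ℝ)*(pdS γ p 1)^2*(pdS (pdS γ) p 2)^3*(pdT γ p 2) + (pdS γ p 1)*(pdS γ p 2)*(pdS (pdS γ) p 0)^2*(pdS (pdS γ) p 1)*(pdT γ p 2) + (pdS γ p 1)*(pdS γ p 2)*(pdS (pdS γ) p 0)^2*(pdS (pdS γ) p 2)*(pdT γ p 1) + (pdS γ p 1)*(pdS γ p 2)*(pdS (pdS γ) p 1)^3*(pdT γ p 2) + (pdS γ p 1)*(pdS γ p 2)*(pdS (pdS γ) p 1)^2*(pdS (pdS γ) p 2)*(pdT γ p 1) + (pdS γ p 1)*(pdS γ p 2)*(pdS (pdS γ) p 1)*(pdS (pdS γ) p 2)^2*(pdT γ p 2) + (pdS γ p 1)*(pdS γ p 2)*(pdS (pdS γ) p 2)^3*(pdT γ p 1) + (-1:ℝ)*(pdS γ p 1)*(pdS (pdS γ) p 0)^2*(pdS (pdS (pdS γ)) p 0)*(pdT γ p 2) + (pdS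 γ p 1)*(pdS (pdS γ) p 0)^2*(pdS (pdS (pdS γ)) p 2)*(pdT γ p 0) + (-1:ℝ)*(pdS γ p 1)*(pdS (pdS γ) p 1)^2*(pdS (pdS (pdS γ)) p 0)*(pdT γ p 2) + (pdS γ p 1)*(pdS (pdS γ) p 1)^2*(pdS (pdS (pdS γ)) p 2)*(pdT γ p 0) + (-1:ℝ)*(pdS γ p 1)*(pdS (pdS γ) p 2)^2*(pdS (pdS (pdS γ)) p 0)*(pdT γ p 2) + (pdS γ p 1)*(pdS (pdS γ) p 2)^2*(pdS (pdS (pdS γ)) p 2)*(pdT γ p 0) + (-1:ℝ)*(pdS γ p 2)^2*(pdS (pdS γ) p 0)^3*(pdT γ p 0) + (-1:ℝ)*(pdS γ p 2)^2*(pdS (pdS γ) p 0)^2*(pdS (pdS γ) p 1)*(pdT γ p 1) + (-1:ℝ)*(pdS γ p 2)^2*(pdS (pdS γ) p 0)*(pdS (pdS γ) p 1)^2*(pdT γ p 0) + (-1:ℝ)*(pdS γ p 2)^2*(pdS (pdS γ) p 0)*(pdS (pdS γ) p 2)^2*(pdT γ p 0) + (-1:ℝ)*(pdS γ p 2)^2*(pdS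 (pdS γ) p 1)^3*(pdT γ p 1) + (-1:ℝ)*(pdS γ p 2)^2*(pdS (pdS γ) p 1)*(pdS (pdS γ) p 2)^2*(pdT γ p 1) + (pdS γ p 2)*(pdS (pdS γ) p 0)^2*(pdS (pdS (pdS γ)) p 0)*(pdT γ p 1) + (-1:ℝ)*(pdS γ p 2)*(pdS (pdS γ) p 0)^2*(pdS (pdS (pdS γ)) p 1)*(pdT γ p 0) + (pdS γ p 2)*(pdS (pdS γ) p 1)^2*(pdS (pdS (pdS γ)) p 0)*(pdT γ p 1) + (-1:ℝ)*(pdS γ p 2)*(pdS (pdS γ) p 1)^2*(pdS (pdS (pdS γ)) p 1)*(pdT γ p 0) + (pdS γ p 2)*(pdS (pdS γ) p 2)^2*(pdS (pdS (pdS γ)) p 0)*(pdT γ p 1) + (-1:ℝ)*(pdS γ p 2)*(pdS (pdS γ) p 2)^2*(pdS (pdS (pdS γ)) p 1)*(pdT γ p 0)) * e1 + ((-3:ℝ)*(pdS γ p 0)*(pdS (pdS γ) p 0)^2*(pdS (pdS γ) p 1)*(pdT γ p 2) + (3:ℝ)*(pdS γ p 0)*(pdS (pdS γ) p 0)^2*(pdS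 (pdS γ) p 2)*(pdT γ p 1) + (-3:ℝ)*(pdS γ p 0)*(pdS (pdS γ) p 1)^3*(pdT γ p 2) + (3:ℝ)*(pdS γ p 0)*(pdS (pdS γ) p 1)^2*(pdS (pdS γ) p 2)*(pdT γ p 1) + (-3:ℝ)*(pdS γ p 0)*(pdS (pdS γ) p 1)*(pdS (pdS γ) p 2)^2*(pdT γ p 2) + (3:ℝ)*(pdS γ p 0)*(pdS (pdS γ) p 2)^3*(pdT γ p 1) + (3:ℝ)*(pdS γ p 1)*(pdS (pdS γ) p 0)^3*(pdT γ p 2) + (-3:ℝ)*(pdS γ p 1)*(pdS (pdS γ) p 0)^2*(pdS (pdS γ) p 2)*(pdT γ p 0) + (3:ℝ)*(pdS γ p 1)*(pdS (pdS γ) p 0)*(pdS (pdS γ) p 1)^2*(pdT γ p 2) + (3:ℝ)*(pdS γ p 1)*(pdS (pdS γ) p 0)*(pdS (pdS γ) p 2)^2*(pdT γ p 2) + (-3:ℝ)*(pdS γ p 1)*(pdS (pdS γ) p 1)^2*(pdS (pdS γ) p 2)*(pdT γ p 0) + (-3:ℝ)*(pdS γ p 1)*(pdS (pdS γ) p 2)^3*(pdT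 γ p 0) + (-3:ℝ)*(pdS γ p 2)*(pdS (pdS γ) p 0)^3*(pdT γ p 1) + (3:ℝ)*(pdS γ p 2)*(pdS (pdS γ) p 0)^2*(pdS (pdS γ) p 1)*(pdT γ p 0) + (-3:ℝ)*(pdS γ p 2)*(pdS (pdS γ) p 0)*(pdS (pdS γ) p 1)^2*(pdT γ p 1) + (-3:ℝ)*(pdS γ p 2)*(pdS (pdS γ) p 0)*(pdS (pdS γ) p 2)^2*(pdT γ p 1) + (3:ℝ)*(pdS γ p 2)*(pdS (pdS γ) p 1)^3*(pdT γ p 0) + (3:ℝ)*(pdS γ p 2)*(pdS (pdS γ) p 1)*(pdS (pdS γ) p 2)^2*(pdT γ p 0) + (2:ℝ)*(pdS (pdS γ) p 0)*(pdS (pdS (pdS γ)) p 1)*(pdT γ p 2) + (-2:ℝ)*(pdS (pdS γ) p 0)*(pdS (pdS (pdS γ)) p 2)*(pdT γ p 1) + (-2:ℝ)*(pdS (pdS γ) p 1)*(pdS (pdS (pdS γ)) p 0)*(pdT γ p 2) + (2:ℝ)*(pdS (pdS γ) p 1)*(pdS (pdS (pdS γ)) p 2)*(pdT γ p 0) + (2:ℝ)*(pdS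 (pdS γ) p 2)*(pdS (pdS (pdS γ)) p 0)*(pdT γ p 1) + (-2:ℝ)*(pdS (pdS γ) p 2)*(pdS (pdS (pdS γ)) p 1)*(pdT γ p 0)) * e2) / ((pdS (pdS γ) p 0)*(pdS (pdS γ) p 0) + (pdS (pdS γ) p 1)*(pdS (pdS γ) p 1) + (pdS (pdS γ) p 2)*(pdS (pdS γ) p 2))^2
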